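/- Let A be a unital C*-algebra and let q ∈ A be an idempotent. Set z = (2q* − 1)(2q − 1) + 1 and p = z^{1/2} · q · z^{−1/2}. Then p is a projection, i.e., p* = p and p² = p. -/
import Mathlib


/-- For an idempotent `q` in a unital C*-algebra, with
`z = (2q*−1)(2q−1)+1`, any positive square root `s` of `z` with inverse `si`
(so `s = z^{1/2}` and `si = z^{-1/2}`) yields a projection `p = z^{1/2} q z^{-1/2}`. -/
theorem idempotent_similar_projection
    {A : Type*} [CStarAlgebra A] [PartialOrder A] [StarOrderedRing A]
    (q : A) (hq : q * q = q)
    (s si : A) (hs : 0 ≤ s)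
    (hss : s * s = (2 * star q - 1) * (2 * q - 1) + 1)
    (hsi : s * si = 1) (his : si * s = 1) :
    star (s * q * si) = s * q * si ∧ (s * q * si) * (s * q * si) = s * q * si := by
  have hq' : star q * star q = star q := by
    have := congrArg star hq
    simpa [star_mul] using this
  have hsa : star s = s := (IsSelfAdjoint.of_nonneg hs).star_eq
  have hsia : star si = si := by
    calc star si = star si * (s * si) := by rw [hsi, mul_one]
      _ = (star si * star s) * si := by rw [hsa, mul_assoc]
      _ = star (s * si) * si := by rw [star_mul]
      _ = si := by rw [hsi, star_one, one_mul]
  -- key intertwining identity: z q = q* z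
  have hzq : (s * s) * q = star q * (s * s) := by
    rw [hss]
    have e1 : ((2 * star q - 1) * (2 * q - 1) + 1) * q
        = 4 * (star q * (q * q)) - 2 * (star q * q) - 2 * (q * q) + 2 * q := by
      noncomm_ring
    have e2 : star q * ((2 * star q - 1) * (2 * q - 1) + 1)
        = 4 * ((star q * star q) * q) - 2 * (star q * star q) - 2 * (star q * q)
          + 2 * star q := by
      noncomm_ring
    rw [e1, e2, hq, hq']
    noncomm_ring
  -- hence q* = z q z⁻¹
  have hqs : star q = s * (s * (q * (si * si))) := by
    calc star q = star q * ((s * (s * si)) * si) := by rw [hsi, mul_one, hsi, mul_one]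
      _ = (star q * (s * s)) * (si * si) := by noncomm_ring
      _ = ((s * s) * q) * (si * si) := by rw [hzq]
      _ = s * (s * (q * (si * si))) := by noncomm_ring
  constructor
  · calc star (s * q * si) = si * (star q * s) := by
          rw [star_mul, star_mul, hsia, hsa]
      _ = si * ((s * (s * (q * (si * si)))) * s) := by rw [hqs]
      _ = (si * s) * (s * q * si) * (si * s) := by noncomm_ring
      _ = s * q * si := by rw [his, one_mul, mul_one]
  · calc (s * q * si) * (s * q * si) = s * (q * ((si * s) * q)) * si := by noncomm_ring
      _ = s * (q * q) * si := by rw [his, one_mul, ← mul_assoc]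
      _ = s * q * si := by rw [hq]
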